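/- Let J be skew-symmetric and R symmetric positive definite real n×n matrices, and P symmetric positive definite. Then every eigenvalue of the matrix (J - R)P has strictly negative real part (i.e., (J-R)P is Hurwitz). -/

import Mathlib

open Matrix Complex

lemma re_quad {n : ℕ} (M : Matrix (Fin n) (Fin n) ℝ) (v : Fin n → ℂ) :
    (star v ⬝ᵥ (M.map (algebraMap ℝ ℂ)) *ᵥ v).re
      = (fun i => (v i).re) ⬝ᵥ M *ᵥ (fun i => (v i).re)
        + (fun i => (v i).im) ⬝ᵥ M *ᵥ (fun i => (v i).im) := by
  simp only [dotProduct, mulVec, Pi.star_apply, map_apply,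
    Complex.coe_algebraMap]
  rw [← Finset.sum_add_distrib]
  rw [Complex.re_sum]
  refine Finset.sum_congr rfl fun i _ => ?_
  simp [Finset.mul_sum, Complex.re_sum, Complex.mul_re, Complex.mul_im, Complex.ofReal_re, Complex.ofReal_im,
    ← Finset.sum_add_distrib]

lemma pos_quad {n : ℕ} {M : Matrix (Fin n) (Fin n) ℝ} (hM : M.PosDef) {v : Fin n → ℂ}
    (hv : v ≠ 0) : 0 < (star v ⬝ᵥ (M.map (algebraMap ℝ ℂ)) *ᵥ v).re := by
  rw [re_quad]
  set a : Fin n → ℝ := fun i => (v i).re with ha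
  set b : Fin n → ℝ := fun i => (v i).im with hb
  have hab : a ≠ 0 ∨ b ≠ 0 := by
    by_contra h
    push_neg at h
    apply hv
    funext i
    have h1 := congrFun h.1 i
    have h2 := congrFun h.2 i
    simp only [ha, hb, Pi.zero_apply] at h1 h2
    exact Complex.ext h1 h2
  rcases hab with h | h
  · have := hM.dotProduct_mulVec_pos h
    have h2 : 0 ≤ b ⬝ᵥ M *ᵥ b := by
      have := hM.posSemidef.dotProduct_mulVec_nonneg b
      simpa using this
    simp only [star_trivial] at this
    linarith
  · have := hM.dotProduct_mulVec_pos h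
    have h2 : 0 ≤ a ⬝ᵥ M *ᵥ a := by
      have := hM.posSemidef.dotProduct_mulVec_nonneg a
      simpa using this
    simp only [star_trivial] at this
    linarith

lemma skew_quad {n : ℕ} {M : Matrix (Fin n) (Fin n) ℝ} (hM : Mᵀ = -M) (v : Fin n → ℂ) :
    (star v ⬝ᵥ (M.map (algebraMap ℝ ℂ)) *ᵥ v).re = 0 := by
  have key : ∀ x : Fin n → ℝ, x ⬝ᵥ M *ᵥ x = 0 := by
    intro x
    have h1 : x ⬝ᵥ M *ᵥ x = (Mᵀ *ᵥ x) ⬝ᵥ x := by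
      rw [dotProduct_mulVec, mulVec_transpose]
    rw [hM] at h1
    have h2 : ((-M) *ᵥ x) ⬝ᵥ x = -(x ⬝ᵥ M *ᵥ x) := by
      rw [neg_mulVec, neg_dotProduct, dotProduct_comm]
    rw [h2] at h1
    linarith
  rw [re_quad, key, key, add_zero]

theorem stmt_1 {n : ℕ} (J R P : Matrix (Fin n) (Fin n) ℝ)
    (hJ : Jᵀ = -J) (hR : R.PosDef) (hP : P.PosDef) :
    ∀ μ : ℂ, μ ∈ spectrum ℂ (((J - R) * P).map (algebraMap ℝ ℂ)) → μ.re < 0 := by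
  intro μ hμ
  set f := algebraMap ℝ ℂ with hf
  set A := ((J - R) * P).map f with hA
  -- obtain eigenvector
  rw [← AlgEquiv.spectrum_eq (Matrix.toLinAlgEquiv' : Matrix (Fin n) (Fin n) ℂ ≃ₐ[ℂ] _) A,
    ← Module.End.hasEigenvalue_iff_mem_spectrum] at hμ
  obtain ⟨v, hv⟩ := hμ.exists_hasEigenvector
  have hv0 : v ≠ 0 := hv.right
  have heig : A *ᵥ v = μ • v := by
    have := hv.apply_eq_smul
    rwa [Matrix.toLinAlgEquiv'_apply] at this
  -- rewrite A
  have hAm : A = (J.map f - R.map f) * P.map f := by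
    rw [hA, Matrix.map_mul]
    congr 1
    ext i j
    simp [Matrix.map_apply]
  set w : Fin n → ℂ := (P.map f) *ᵥ v with hw
  have heig2 : (J.map f - R.map f) *ᵥ w = μ • v := by
    rw [hw, mulVec_mulVec, ← hAm, heig]
  -- q = star v ⬝ᵥ P v is real positive
  set q : ℂ := star v ⬝ᵥ (P.map f) *ᵥ v with hq
  have hqre : 0 < q.re := pos_quad hP hv0
  have hPc : (P.map f)ᴴ = P.map f := by
    ext i j
    have : P j i = P i j := by
      have := congrFun (congrFun hP.isHermitian i) j
      simpa [Matrix.conjTranspose_apply] using this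
    simp [Matrix.conjTranspose_apply, Matrix.map_apply, hf, this]
  have hqreal : (starRingEnd ℂ) q = q := by
    rw [hq, starRingEnd_apply, ← star_dotProduct, star_mulVec, hPc,
      ← dotProduct_mulVec]
  have hqim : q.im = 0 := by
    have := congrArg Complex.im hqreal
    simp only [Complex.conj_im] at this
    linarith
  -- star w ⬝ᵥ v = q
  have hwv : star w ⬝ᵥ v = q := by
    rw [hw, star_mulVec, hPc, ← dotProduct_mulVec, hq]
  -- main identity
  have hmain : star w ⬝ᵥ (J.map f - R.map f) *ᵥ w = μ * q := by
    rw [heig2, dotProduct_smul, smul_eq_mul, hwv]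
  have hre : (star w ⬝ᵥ (J.map f - R.map f) *ᵥ w).re
      = - (star w ⬝ᵥ (R.map f) *ᵥ w).re := by
    rw [Matrix.sub_mulVec, dotProduct_sub, Complex.sub_re, skew_quad hJ w]
    ring
  have hw0 : w ≠ 0 := by
    intro h
    have hz : P.map ⇑f *ᵥ v = 0 := hw.symm.trans h
    have hq0 : q = 0 := by rw [hq, hz, dotProduct_zero]
    rw [hq0] at hqre
    simp at hqre
  have hRw : 0 < (star w ⬝ᵥ (R.map f) *ᵥ w).re := pos_quad hR hw0
  have hfin : (μ * q).re = μ.re * q.re := by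
    rw [Complex.mul_re, hqim]; ring
  rw [hmain, hfin] at hre
  nlinarith
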